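/- arXiv:1906.10976 — 4 statements merged into one kernel-verified Lean document; each statement's English description precedes it below -/
import Mathlib

section
/- If E : ℝ^{k+2} → ℝ is smooth in variables (x, u, u₁, …, u_k) with k ≥ 2, and for all (x, u, u₁, …, u_{k+1}) the identity u₁·f(x, u, u₁, u₂) = ∂E/∂x + u₁ ∂E/∂u + u₂ ∂E/∂u₁ + ⋯ + u_{k+1} ∂E/∂u_k holds for a smooth f depending only on (x, u, u₁, u₂), then ∂E/∂u_k ≡ 0, so E depends only on (x, u, u₁, …, u_{k-1}). -/
/-- Partial derivative of `E` with respect to the `j`-th coordinate at the point `a`. -/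
noncomputable def pcoord {N : ℕ} (j : Fin N) (E : (Fin N → ℝ) → ℝ) (a : Fin N → ℝ) : ℝ :=
  deriv (fun t => E (Function.update a j t)) (a j)

/-- If `u₁ · f(x,u,u₁,u₂) = ∂E/∂x + u₁ ∂E/∂u + ⋯ + u_{k+1} ∂E/∂u_k` holds for all values
of the jet coordinates `(x, u, u₁, …, u_{k+1})`, with `E` depending on `(x,u,u₁,…,u_k)`
and `f` only on `(x,u,u₁,u₂)`, then `∂E/∂u_k ≡ 0`. -/
theorem stmt_3 (k : ℕ) (hk : 2 ≤ k)
    (E : (Fin (k+2) → ℝ) → ℝ) (hE : ContDiff ℝ (⊤ : ℕ∞) E)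
    (f : ℝ → ℝ → ℝ → ℝ → ℝ)
    (hf : ContDiff ℝ (⊤ : ℕ∞) (fun v : ℝ × ℝ × ℝ × ℝ => f v.1 v.2.1 v.2.2.1 v.2.2.2))
    (hid : ∀ z : Fin (k+3) → ℝ,
      z 1 * f (z 0) (z 1) (z 2) (z 3)
        = pcoord 0 E (fun j => z j.castSucc)
          + ∑ i : Fin (k+1), z i.succ.succ * pcoord i.succ E (fun j => z j.castSucc)) :
    ∀ a : Fin (k+2) → ℝ, pcoord (Fin.last (k+1)) E a = 0 := by
  intro a
  set g : ℝ → Fin (k+3) → ℝ := fun t j => if h : (j : ℕ) < k+2 then a ⟨j, h⟩ else t with hg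
  have hcast : ∀ t, (fun j : Fin (k+2) => g t j.castSucc) = a := by
    intro t; funext j
    simp only [hg, Fin.coe_castSucc, j.isLt, dif_pos]
  have hagree : ∀ j : Fin (k+3), (j : ℕ) < k+2 → g 0 j = g 1 j := by
    intro j hj; simp [hg, hj]
  have h0 := hid (g 0)
  have h1 := hid (g 1)
  rw [hcast] at h0 h1
  have hv0 : ((0 : Fin (k+3)) : ℕ) = 0 := rfl
  have hv1 : ((1 : Fin (k+3)) : ℕ) = 1 := by
    rw [show (1:Fin (k+3)) = Fin.ofNat (k+3) 1 from rfl, Fin.val_ofNat]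
    exact Nat.mod_eq_of_lt (by omega)
  have hv2 : ((2 : Fin (k+3)) : ℕ) = 2 := by
    rw [show (2:Fin (k+3)) = Fin.ofNat (k+3) 2 from rfl, Fin.val_ofNat]
    exact Nat.mod_eq_of_lt (by omega)
  have hv3 : ((3 : Fin (k+3)) : ℕ) = 3 := by
    rw [show (3:Fin (k+3)) = Fin.ofNat (k+3) 3 from rfl, Fin.val_ofNat]
    exact Nat.mod_eq_of_lt (by omega)
  have e0 : g 0 0 = g 1 0 := hagree _ (by omega)
  have e1 : g 0 1 = g 1 1 := hagree _ (by rw [hv1]; omega)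
  have e2 : g 0 2 = g 1 2 := hagree _ (by rw [hv2]; omega)
  have e3 : g 0 3 = g 1 3 := hagree _ (by rw [hv3]; omega)
  rw [Fin.sum_univ_castSucc] at h0 h1
  have hterm : ∀ i : Fin k, g 0 i.castSucc.succ.succ = g 1 i.castSucc.succ.succ := by
    intro i
    apply hagree
    simp only [Fin.val_succ, Fin.coe_castSucc]
    omega
  have hsum : (∑ i : Fin k, g 0 i.castSucc.succ.succ * pcoord i.castSucc.succ E a)
      = ∑ i : Fin k, g 1 i.castSucc.succ.succ * pcoord i.castSucc.succ E a := by
    apply Finset.sum_congr rfl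
    intro i _
    rw [hterm i]
  have hlast0 : g 0 (Fin.last k).succ.succ = 0 := by
    simp [hg, Fin.val_succ, Fin.val_last]
  have hlast1 : g 1 (Fin.last k).succ.succ = 1 := by
    simp [hg, Fin.val_succ, Fin.val_last]
  have hfin : (Fin.last k).succ = Fin.last (k+1) := rfl
  rw [e0, e1, e2, e3, hsum, hlast0, hfin] at h0
  rw [hlast1, hfin] at h1
  have := h1.symm.trans h0
  linarith [this]
end

section
/- Any scalar second-order ODE f(x, u, u', u'') = 0 (with f smooth) that is invariant under x-translations (i.e., f does not depend on x), admits a conservation law of the form u'·f = dE/dx for a smooth function E(x, u, u') holding identically in jet coordinates, and satisfies the regularity condition that (1/p)∂E/∂p extends smoothly through p = 0, is variational: there exists a (C¹) Lagrangian L(u, u') with f = ∂L/∂u − d/dx(∂L/∂u'). -/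
open intervalIntegral MeasureTheory

noncomputable def mtt (t : ℝ) : (ℝ × ℝ) →L[ℝ] (ℝ × ℝ) :=
  (ContinuousLinearMap.fst ℝ ℝ ℝ).prod 0
    + t • ((0 : (ℝ×ℝ) →L[ℝ] ℝ).prod (ContinuousLinearMap.snd ℝ ℝ ℝ))

lemma mtt_apply (t : ℝ) (v : ℝ × ℝ) : mtt t v = (v.1, t * v.2) := by
  simp [mtt, smul_eq_mul]

lemma mtt_cont : Continuous fun t : ℝ => mtt t := by
  unfold mtt
  exact continuous_const.add (continuous_id.smul continuous_const)

lemma mtt_norm_le (t : ℝ) (ht : |t| ≤ 1) : ‖mtt t‖ ≤ 1 := by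
  apply ContinuousLinearMap.opNorm_le_bound _ zero_le_one
  intro v
  rw [mtt_apply]
  have h1 : ‖((v.1, t*v.2) : ℝ × ℝ)‖ = max ‖v.1‖ ‖t*v.2‖ := rfl
  have h2 : ‖v‖ = max ‖v.1‖ ‖v.2‖ := rfl
  rw [h1, h2, one_mul]
  apply max_le (le_max_left _ _)
  have h3 : ‖t * v.2‖ = |t| * ‖v.2‖ := by simp [abs_mul]
  rw [h3]
  calc |t| * ‖v.2‖ ≤ 1 * ‖v.2‖ := mul_le_mul_of_nonneg_right ht (norm_nonneg _)
    _ ≤ max ‖v.1‖ ‖v.2‖ := by rw [one_mul]; exact le_max_right _ _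

section G
variable {b : ℝ × ℝ → ℝ} (hb : ContDiff ℝ (⊤ : ℕ∞) b)

noncomputable def Gder (b : ℝ × ℝ → ℝ) (v : ℝ × ℝ) (t : ℝ) : (ℝ × ℝ) →L[ℝ] ℝ :=
  (fderiv ℝ b (v.1, v.2 * t)).comp (mtt t)

lemma Gder_cont (hb : ContDiff ℝ (⊤ : ℕ∞) b) :
    Continuous (fun w : (ℝ × ℝ) × ℝ => Gder b w.1 w.2) := by
  exact Continuous.clm_comp
    ((hb.continuous_fderiv (by simp)).comp
      (by fun_prop : Continuous fun w : (ℝ × ℝ) × ℝ => (w.1.1, w.1.2 * w.2)))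
    (mtt_cont.comp continuous_snd)

lemma hasFDerivAt_inner (hb : ContDiff ℝ (⊤ : ℕ∞) b) (t : ℝ) (v : ℝ × ℝ) :
    HasFDerivAt (fun w : ℝ × ℝ => b (w.1, w.2 * t)) (Gder b v t) v := by
  have h1 : HasFDerivAt b (fderiv ℝ b (v.1, v.2 * t)) (v.1, v.2 * t) :=
    (hb.differentiable (by simp) _).hasFDerivAt
  have h2 : HasFDerivAt (fun w : ℝ × ℝ => ((w.1, w.2 * t) : ℝ × ℝ)) (mtt t) v := by
    have : ∀ w : ℝ × ℝ, ((w.1, w.2 * t) : ℝ × ℝ) = mtt t w := by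
      intro w; rw [mtt_apply]; rw [mul_comm]
    simp_rw [this]
    exact (mtt t).hasFDerivAt
  exact h1.comp v h2

lemma G_hasFDerivAt (hb : ContDiff ℝ (⊤ : ℕ∞) b) (v₀ : ℝ × ℝ) :
    HasFDerivAt (fun v : ℝ × ℝ => ∫ t in (0:ℝ)..1, b (v.1, v.2 * t))
      (∫ t in (0:ℝ)..1, Gder b v₀ t) v₀ := by
  -- bound on a compact set
  obtain ⟨C, hC⟩ : ∃ C, ∀ y ∈ (fun w : (ℝ×ℝ)×ℝ => (w.1.1, w.1.2*w.2)) ''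
      ((Metric.closedBall v₀ 1) ×ˢ (Set.Icc (-1:ℝ) 1)), ‖fderiv ℝ b y‖ ≤ C := by
    have hcpt : IsCompact ((fun w : (ℝ×ℝ)×ℝ => ((w.1.1, w.1.2*w.2) : ℝ×ℝ)) ''
        ((Metric.closedBall v₀ 1) ×ˢ (Set.Icc (-1:ℝ) 1))) :=
      ((isCompact_closedBall v₀ 1).prod isCompact_Icc).image (by fun_prop)
    exact hcpt.exists_bound_of_continuousOn ((hb.continuous_fderiv (by simp)).continuousOn)
  have key := intervalIntegral.hasFDerivAt_integral_of_dominated_of_fderiv_le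
    (F := fun (v : ℝ × ℝ) t => b (v.1, v.2 * t)) (F' := fun v t => Gder b v t)
    (x₀ := v₀) (a := 0) (b := 1) (μ := volume) (bound := fun _ => |C|) (Metric.ball_mem_nhds v₀ zero_lt_one)
    ?_ ?_ ?_ ?_ ?_ ?_
  · exact key
  · filter_upwards with v
    exact ((hb.continuous.comp (by fun_prop)) : Continuous fun t : ℝ => b (v.1, v.2*t)).aestronglyMeasurable
  · exact ((hb.continuous.comp (by fun_prop)) : Continuous fun t : ℝ => b (v₀.1, v₀.2*t)).intervalIntegrable 0 1
  · have : Continuous fun t : ℝ => Gder b v₀ t :=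
      (Gder_cont hb).comp (Continuous.prodMk continuous_const continuous_id)
    exact this.aestronglyMeasurable
  · filter_upwards with t
    intro ht v hv
    have habs : |t| ≤ 1 := by
      rw [Set.uIoc_of_le zero_le_one] at ht
      rw [abs_le]
      exact ⟨by linarith [ht.1], ht.2⟩
    calc ‖Gder b v t‖ ≤ ‖fderiv ℝ b (v.1, v.2 * t)‖ * ‖mtt t‖ :=
          ContinuousLinearMap.opNorm_comp_le _ _
      _ ≤ |C| * 1 := by
          apply mul_le_mul _ (mtt_norm_le t habs) (norm_nonneg _) (abs_nonneg _)
          refine le_trans (hC _ ⟨(v, t), ⟨?_, ?_⟩, rfl⟩) (le_abs_self C)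
          · exact Metric.ball_subset_closedBall hv
          · rw [abs_le] at habs; exact ⟨habs.1, habs.2⟩
      _ = |C| := mul_one _
  · exact intervalIntegrable_const
  · filter_upwards with t
    intro _ v _
    exact hasFDerivAt_inner hb t v

end G

section J
variable {b : ℝ × ℝ → ℝ}

noncomputable def Jj (b : ℝ × ℝ → ℝ) (v : ℝ × ℝ) : ℝ := ∫ s in (0:ℝ)..v.2, b (v.1, s)

lemma Jj_eq (b : ℝ × ℝ → ℝ) (v : ℝ × ℝ) :
    Jj b v = v.2 * ∫ t in (0:ℝ)..1, b (v.1, v.2 * t) := by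
  have := intervalIntegral.smul_integral_comp_mul_right (a := (0:ℝ)) (b := 1)
    (fun s => b (v.1, s)) v.2
  simp only [smul_eq_mul, zero_mul, one_mul] at this
  rw [Jj, ← this]
  congr 1
  apply intervalIntegral.integral_congr
  intro t _
  simp [mul_comm]

lemma Jj_contDiff (hb : ContDiff ℝ (⊤ : ℕ∞) b) : ContDiff ℝ 1 (Jj b) := by
  have hG : ContDiff ℝ 1 (fun v : ℝ × ℝ => ∫ t in (0:ℝ)..1, b (v.1, v.2 * t)) := by
    rw [contDiff_one_iff_fderiv]
    constructor
    · exact fun v => (G_hasFDerivAt hb v).differentiableAt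
    · have : (fun v : ℝ × ℝ => fderiv ℝ (fun v : ℝ × ℝ => ∫ t in (0:ℝ)..1, b (v.1, v.2 * t)) v)
          = fun v => ∫ t in (0:ℝ)..1, Gder b v t :=
        funext fun v => (G_hasFDerivAt hb v).fderiv
      show Continuous (fun v : ℝ × ℝ => fderiv ℝ (fun v : ℝ × ℝ => ∫ t in (0:ℝ)..1, b (v.1, v.2 * t)) v)
      rw [this]
      exact intervalIntegral.continuous_parametric_intervalIntegral_of_continuous'
        (f := fun (v : ℝ × ℝ) t => Gder b v t) (Gder_cont hb) 0 1
  have : Jj b = fun v : ℝ × ℝ => v.2 * ∫ t in (0:ℝ)..1, b (v.1, v.2 * t) :=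
    funext (Jj_eq b)
  rw [this]
  exact (contDiff_snd.of_le le_top).mul hG

lemma Jj_snd_hasDerivAt (hb : ContDiff ℝ (⊤ : ℕ∞) b) (w r : ℝ) :
    HasDerivAt (fun t => Jj b (w, t)) (b (w, r)) r := by
  have hc : Continuous fun s => b (w, s) := hb.continuous.comp (by fun_prop)
  exact intervalIntegral.integral_hasDerivAt_right (hc.intervalIntegrable 0 r)
    (hc.stronglyMeasurable.stronglyMeasurableAtFilter) hc.continuousAt

lemma Jj_fderiv_snd (hb : ContDiff ℝ (⊤ : ℕ∞) b) (v : ℝ × ℝ) :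
    fderiv ℝ (Jj b) v (0, 1) = b v := by
  have hdiff : DifferentiableAt ℝ (Jj b) v :=
    ((Jj_contDiff hb).differentiable (by simp)) v
  have hcurve : HasDerivAt (fun t : ℝ => ((v.1, t) : ℝ × ℝ)) ((0:ℝ), (1:ℝ)) v.2 :=
    (hasDerivAt_const _ _).prodMk (hasDerivAt_id _)
  have h1 : HasDerivAt (fun t => Jj b (v.1, t)) (fderiv ℝ (Jj b) v (0,1)) v.2 := by
    have := hdiff.hasFDerivAt.comp_hasDerivAt v.2 hcurve
    exact this
  have h2 := Jj_snd_hasDerivAt hb v.1 v.2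
  have := h1.unique h2
  simpa using this

end J

section slots
variable {F : ℝ → ℝ → ℝ → ℝ}
  (hF : ContDiff ℝ (⊤ : ℕ∞) (fun v : ℝ × ℝ × ℝ => F v.1 v.2.1 v.2.2))

lemma hasDerivAt_slot1 (hF : ContDiff ℝ (⊤ : ℕ∞) (fun v : ℝ × ℝ × ℝ => F v.1 v.2.1 v.2.2))
    (x u p : ℝ) : HasDerivAt (fun t => F t u p)
      (fderiv ℝ (fun v : ℝ × ℝ × ℝ => F v.1 v.2.1 v.2.2) (x,u,p) (1,0,0)) x := by
  have h1 := (hF.differentiable (by simp) (x,u,p)).hasFDerivAt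
  have h2 : HasDerivAt (fun t : ℝ => ((t,u,p) : ℝ×ℝ×ℝ)) (((1:ℝ),(0:ℝ),(0:ℝ)) : ℝ×ℝ×ℝ) x :=
    (hasDerivAt_id x).prodMk ((hasDerivAt_const x u).prodMk (hasDerivAt_const x p))
  exact h1.comp_hasDerivAt x h2

lemma hasDerivAt_slot2 (hF : ContDiff ℝ (⊤ : ℕ∞) (fun v : ℝ × ℝ × ℝ => F v.1 v.2.1 v.2.2))
    (x u p : ℝ) : HasDerivAt (fun t => F x t p)
      (fderiv ℝ (fun v : ℝ × ℝ × ℝ => F v.1 v.2.1 v.2.2) (x,u,p) (0,1,0)) u := by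
  have h1 := (hF.differentiable (by simp) (x,u,p)).hasFDerivAt
  have h2 : HasDerivAt (fun t : ℝ => ((x,t,p) : ℝ×ℝ×ℝ)) (((0:ℝ),(1:ℝ),(0:ℝ)) : ℝ×ℝ×ℝ) u :=
    (hasDerivAt_const u x).prodMk ((hasDerivAt_id u).prodMk (hasDerivAt_const u p))
  exact h1.comp_hasDerivAt u h2

lemma hasDerivAt_slot3 (hF : ContDiff ℝ (⊤ : ℕ∞) (fun v : ℝ × ℝ × ℝ => F v.1 v.2.1 v.2.2))
    (x u p : ℝ) : HasDerivAt (fun t => F x u t)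
      (fderiv ℝ (fun v : ℝ × ℝ × ℝ => F v.1 v.2.1 v.2.2) (x,u,p) (0,0,1)) p := by
  have h1 := (hF.differentiable (by simp) (x,u,p)).hasFDerivAt
  have h2 : HasDerivAt (fun t : ℝ => ((x,u,t) : ℝ×ℝ×ℝ)) (((0:ℝ),(0:ℝ),(1:ℝ)) : ℝ×ℝ×ℝ) p :=
    (hasDerivAt_const p x).prodMk ((hasDerivAt_const p u).prodMk (hasDerivAt_id p))
  exact h1.comp_hasDerivAt p h2

end slots


set_option maxHeartbeats 1000000


/-- A smooth `x`-translation-invariant second-order scalar ODE `f(u,u',u'') = 0` with a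
conservation law `u'·f = dE/dx` (identically in jet coordinates) and the regularity that
`(1/p)∂E/∂p` extends smoothly through `p = 0` is variational: there is a `C¹` Lagrangian
`L(u,u')` whose Euler–Lagrange expression along any smooth curve is `f`. -/
theorem stmt_7 (f : ℝ → ℝ → ℝ → ℝ)
    (hf : ContDiff ℝ (⊤ : ℕ∞) (fun v : ℝ × ℝ × ℝ => f v.1 v.2.1 v.2.2))
    (E : ℝ → ℝ → ℝ → ℝ)
    (hE : ContDiff ℝ (⊤ : ℕ∞) (fun v : ℝ × ℝ × ℝ => E v.1 v.2.1 v.2.2))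
    (hcons : ∀ x u p q : ℝ, p * f u p q =
      deriv (fun t => E t u p) x + p * deriv (fun t => E x t p) u
        + q * deriv (fun t => E x u t) p)
    (hreg : ∃ B : ℝ → ℝ → ℝ → ℝ,
      ContDiff ℝ (⊤ : ℕ∞) (fun v : ℝ × ℝ × ℝ => B v.1 v.2.1 v.2.2) ∧
      ∀ x u p, deriv (fun t => E x u t) p = p * B x u p) :
    ∃ L : ℝ → ℝ → ℝ,
      ContDiff ℝ 1 (fun v : ℝ × ℝ => L v.1 v.2) ∧
      ∀ (u : ℝ → ℝ), ContDiff ℝ (⊤ : ℕ∞) u → ∀ x : ℝ,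
        f (u x) (deriv u x) (deriv (deriv u) x)
          = deriv (fun v => L v (deriv u x)) (u x)
            - deriv (fun y => deriv (fun t => L (u y) t) (deriv u y)) x := by
  classical
  obtain ⟨B, hB, hBp⟩ := hreg
  set E3 : ℝ × ℝ × ℝ → ℝ := fun v => E v.1 v.2.1 v.2.2 with hE3def
  -- the smooth coefficient of q
  set b : ℝ × ℝ → ℝ := fun v => B 0 v.1 v.2 with hbdef
  have hb : ContDiff ℝ (⊤ : ℕ∞) b := by
    have : b = (fun v : ℝ × ℝ × ℝ => B v.1 v.2.1 v.2.2) ∘ (fun v : ℝ × ℝ => ((0:ℝ), v.1, v.2)) := rfl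
    rw [this]
    exact hB.comp (by fun_prop)
  -- the partial derivative of E in u at x = 0, as a continuous function of (u,p)
  set eu : ℝ × ℝ → ℝ := fun v => fderiv ℝ E3 (0, v.1, v.2) ((0:ℝ),(1:ℝ),(0:ℝ)) with heudef
  have heucont : Continuous eu := by
    apply Continuous.clm_apply _ continuous_const
    exact (hE.continuous_fderiv (by simp)).comp (by fun_prop)
  have heu_eq : ∀ u p : ℝ, deriv (fun t => E 0 t p) u = eu (u, p) := fun u p =>
    (hasDerivAt_slot2 hE 0 u p).deriv
  -- step A : q = 0 instance of the conservation law
  have hA : ∀ x u p : ℝ, p * f u p 0 =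
      deriv (fun t => E t u p) x + p * deriv (fun t => E x t p) u := by
    intro x u p
    have := hcons x u p 0
    simpa using this
  -- step B : linearity in q
  have hBlin : ∀ x u p q : ℝ, p * f u p q = p * f u p 0 + q * (p * B x u p) := by
    intro x u p q
    have h1 := hcons x u p q
    have h2 := hA x u p
    rw [hBp] at h1
    linarith
  -- E_x vanishes at p = 0
  have hEx0 : ∀ x u : ℝ, deriv (fun t => E t u 0) x = 0 := by
    intro x u
    have := hA x u 0
    simpa using this.symm
  -- E_p does not depend on x
  have hEpx : ∀ x u p : ℝ, deriv (fun t => E x u t) p = deriv (fun t => E 0 u t) p := by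
    intro x u p
    rw [hBp, hBp]
    rcases eq_or_ne p 0 with hp | hp
    · simp [hp]
    · have h1 := hBlin x u p 1
      have h2 := hBlin 0 u p 1
      have : p * B x u p = p * B 0 u p := by linarith
      have := mul_left_cancel₀ hp this
      rw [this]
  -- E x u p - E x u 0 does not depend on x
  have hshift : ∀ x u p : ℝ, E x u p = E x u 0 + (E 0 u p - E 0 u 0) := by
    intro x u p
    have hdiffx : Differentiable ℝ (fun t => E x u t) := fun r =>
      (hasDerivAt_slot3 hE x u r).differentiableAt
    have hdiff0 : Differentiable ℝ (fun t => E 0 u t) := fun r =>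
      (hasDerivAt_slot3 hE 0 u r).differentiableAt
    have hg : Differentiable ℝ (fun t => E x u t - E 0 u t) := hdiffx.sub hdiff0
    have hg' : ∀ r, deriv (fun t => E x u t - E 0 u t) r = 0 := by
      intro r
      rw [deriv_fun_sub (hdiffx r) (hdiff0 r), hEpx x u r, sub_self]
    have := is_const_of_deriv_eq_zero hg hg' p 0
    linarith
  -- E_x vanishes identically
  have hEx : ∀ x u p : ℝ, deriv (fun t => E t u p) x = 0 := by
    intro x u p
    have : (fun t => E t u p) = fun t => E t u 0 + (E 0 u p - E 0 u 0) := by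
      funext t; exact hshift t u p
    rw [this, deriv_add_const, hEx0]
  -- the key pointwise formula for f, first for p ≠ 0
  have keyne : ∀ u p q : ℝ, p ≠ 0 → f u p q = eu (u, p) + q * b (u, p) := by
    intro u p q hp
    have h1 := hBlin 0 u p q
    have h2 := hA 0 u p
    rw [hEx 0 u p, zero_add, heu_eq u p] at h2
    have : p * f u p q = p * (eu (u, p) + q * b (u, p)) := by
      rw [h1, h2]; ring
    exact mul_left_cancel₀ hp this
  -- then for all p by continuity
  have key : ∀ u p q : ℝ, f u p q = eu (u, p) + q * b (u, p) := by
    intro u p q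
    have hc1 : Continuous fun r : ℝ => f u r q := by
      have : (fun r : ℝ => f u r q)
          = (fun v : ℝ × ℝ × ℝ => f v.1 v.2.1 v.2.2) ∘ (fun r : ℝ => (u, r, q)) := rfl
      rw [this]
      exact hf.continuous.comp (by fun_prop)
    have hc2 : Continuous fun r : ℝ => eu (u, r) + q * b (u, r) := by
      apply Continuous.add
      · exact heucont.comp (by fun_prop)
      · exact continuous_const.mul (hb.continuous.comp (by fun_prop))
    have heqon : Set.EqOn (fun r : ℝ => f u r q) (fun r : ℝ => eu (u, r) + q * b (u, r))
        {(0:ℝ)}ᶜ := fun r hr => keyne u r q hr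
    have := Continuous.ext_on (dense_compl_singleton (0:ℝ)) hc1 hc2 heqon
    exact congrFun this p
  -- the Lagrangian
  refine ⟨fun u p => E 0 u p - p * Jj b (u, p), ?_, ?_⟩
  · have h1 : ContDiff ℝ 1 (fun v : ℝ × ℝ => E 0 v.1 v.2) := by
      have : (fun v : ℝ × ℝ => E 0 v.1 v.2)
          = E3 ∘ (fun v : ℝ × ℝ => ((0:ℝ), v.1, v.2)) := rfl
      rw [this]
      exact (hE.comp (by fun_prop)).of_le (by simp)
    have h2 : ContDiff ℝ 1 (fun v : ℝ × ℝ => v.2 * Jj b (v.1, v.2)) := by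
      have : (fun v : ℝ × ℝ => v.2 * Jj b (v.1, v.2)) = fun v : ℝ × ℝ => v.2 * Jj b v := by
        funext v; rfl
      rw [this]
      exact (contDiff_snd.of_le le_top).mul (Jj_contDiff hb)
    exact h1.sub h2
  · intro u hu x
    set U := u x with hU
    set P := deriv u x with hP
    set Q := deriv (deriv u) x with hQ
    have hu1 : Differentiable ℝ u := hu.differentiable (by simp)
    have hu' : ContDiff ℝ ((⊤:ℕ∞) : WithTop ℕ∞) u := hu.of_le (by simp)
    have hu2 : Differentiable ℝ (deriv u) :=
      ((contDiff_infty_iff_deriv.1 hu').2).differentiable (by simp)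
    -- the momentum: ∂L/∂p (w, r) = -(Jj b (w,r))
    have hmom : ∀ w r : ℝ, deriv (fun t => E 0 w t - t * Jj b (w, t)) r = -(Jj b (w, r)) := by
      intro w r
      have hd1 : HasDerivAt (fun t => E 0 w t) (r * b (w, r)) r := by
        have h := hasDerivAt_slot3 hE 0 w r
        have hv : fderiv ℝ E3 (0,w,r) ((0:ℝ),(0:ℝ),(1:ℝ)) = r * b (w, r) := by
          rw [← h.deriv]
          exact hBp 0 w r
        rwa [hv] at h
      have hd2 : HasDerivAt (fun t => t * Jj b (w, t))
          (1 * Jj b (w, r) + r * b (w, r)) r :=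
        (hasDerivAt_id r).mul (Jj_snd_hasDerivAt hb w r)
      have := (hd1.fun_sub hd2).deriv
      rw [this]; ring
    -- fderiv of Jj at (U,P)
    have hJd : HasFDerivAt (Jj b) (fderiv ℝ (Jj b) (U, P)) (U, P) :=
      (((Jj_contDiff hb).differentiable (by simp)) (U, P)).hasFDerivAt
    set Φ := fderiv ℝ (Jj b) (U, P) with hΦ
    -- first term
    have hterm1 : deriv (fun v => E 0 v P - P * Jj b (v, P)) U
        = eu (U, P) - P * Φ (1, 0) := by
      have hd1 : HasDerivAt (fun v => E 0 v P) (eu (U, P)) U := hasDerivAt_slot2 hE 0 U P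
      have hcurve : HasDerivAt (fun v : ℝ => ((v, P) : ℝ × ℝ)) (((1:ℝ),(0:ℝ)) : ℝ × ℝ) U :=
        (hasDerivAt_id U).prodMk (hasDerivAt_const U P)
      have hd2 : HasDerivAt (fun v => Jj b (v, P)) (Φ (1, 0)) U := by
        have := hJd.comp_hasDerivAt U hcurve
        exact this
      exact ((hd1.sub ((hd2.const_mul P)))).deriv
    -- second term
    have hterm2 : deriv (fun y => deriv (fun t => E 0 (u y) t - t * Jj b (u y, t)) (deriv u y)) x
        = -(P * Φ (1, 0) + Q * b (U, P)) := by
      have hrw : (fun y => deriv (fun t => E 0 (u y) t - t * Jj b (u y, t)) (deriv u y))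
          = fun y => -(Jj b (u y, deriv u y)) := by
        funext y; exact hmom (u y) (deriv u y)
      rw [hrw]
      have hcurve : HasDerivAt (fun y : ℝ => ((u y, deriv u y) : ℝ × ℝ)) ((P, Q) : ℝ × ℝ) x :=
        (hu1 x).hasDerivAt.prodMk (hu2 x).hasDerivAt
      have hd : HasDerivAt (fun y => Jj b (u y, deriv u y)) (Φ (P, Q)) x := by
        have := hJd.comp_hasDerivAt x hcurve
        exact this
      have hval : Φ (P, Q) = P * Φ (1, 0) + Q * b (U, P) := by
        have hsum : ((P, Q) : ℝ × ℝ) = P • (((1:ℝ),(0:ℝ)) : ℝ × ℝ) + Q • (((0:ℝ),(1:ℝ)) : ℝ × ℝ) := by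
          simp [Prod.ext_iff]
        rw [hsum, map_add, Φ.map_smul, Φ.map_smul, smul_eq_mul, smul_eq_mul]
        rw [Jj_fderiv_snd hb (U, P)]
      rw [← hval]
      exact hd.neg.deriv
    rw [hterm1, hterm2, key U P Q]
    ring
end

section
/- For a second-order source form with coefficients f_α, the Helmholtz expressions satisfy the dependency H^i_{αβ} − H^i_{βα} − 2 D_j H^{ij}_{αβ} = 0 identically, regardless of whether f is variational. -/
/-- Jet coordinates up to order 4 with `n` independent and `m` dependent variables:
`(x, u, Du, D²u, D³u, D⁴u)` (unsymmetrized higher-order coordinates). -/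
abbrev Jet (n m : ℕ) :=
  (Fin n → ℝ) × (Fin m → ℝ) × (Fin m → Fin n → ℝ) ×
    (Fin m → Fin n → Fin n → ℝ) × (Fin m → Fin n → Fin n → Fin n → ℝ) ×
    (Fin m → Fin n → Fin n → Fin n → Fin n → ℝ)

namespace Jet

variable {n m : ℕ}

/-- Partial derivative `∂/∂xⁱ`. -/
noncomputable def pdx (i : Fin n) (g : Jet n m → ℝ) (z : Jet n m) : ℝ :=
  deriv (fun t => g (Function.update z.1 i t, z.2)) (z.1 i)

/-- Partial derivative `∂_α = ∂/∂u^α`. -/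
noncomputable def pd0 (α : Fin m) (g : Jet n m → ℝ) (z : Jet n m) : ℝ :=
  deriv (fun t => g (z.1, Function.update z.2.1 α t, z.2.2)) (z.2.1 α)

/-- Partial derivative `∂^i_α = ∂/∂u^α_i`. -/
noncomputable def pd1 (α : Fin m) (i : Fin n) (g : Jet n m → ℝ) (z : Jet n m) : ℝ :=
  deriv (fun t => g (z.1, z.2.1,
    Function.update z.2.2.1 α (Function.update (z.2.2.1 α) i t), z.2.2.2)) (z.2.2.1 α i)

/-- Partial derivative `∂^{ij}_α = ∂/∂u^α_{ij}`. -/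
noncomputable def pd2 (α : Fin m) (i j : Fin n) (g : Jet n m → ℝ) (z : Jet n m) : ℝ :=
  deriv (fun t => g (z.1, z.2.1, z.2.2.1,
    Function.update z.2.2.2.1 α
      (Function.update (z.2.2.2.1 α) i (Function.update (z.2.2.2.1 α i) j t)),
    z.2.2.2.2)) (z.2.2.2.1 α i j)

/-- Partial derivative `∂^{ijk}_α = ∂/∂u^α_{ijk}`. -/
noncomputable def pd3 (α : Fin m) (i j k : Fin n) (g : Jet n m → ℝ) (z : Jet n m) : ℝ :=
  deriv (fun t => g (z.1, z.2.1, z.2.2.1, z.2.2.2.1,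
    Function.update z.2.2.2.2.1 α
      (Function.update (z.2.2.2.2.1 α) i
        (Function.update (z.2.2.2.2.1 α i) j
          (Function.update (z.2.2.2.2.1 α i j) k t))),
    z.2.2.2.2.2)) (z.2.2.2.2.1 α i j k)

/-- Total derivative operator
`D_i = ∂_{xⁱ} + u^α_i ∂_α + u^α_{ij} ∂^j_α + u^α_{ijk} ∂^{jk}_α + u^α_{ijkl} ∂^{jkl}_α`. -/
noncomputable def Dtot (i : Fin n) (g : Jet n m → ℝ) (z : Jet n m) : ℝ :=
  pdx i g z
    + ∑ α, z.2.2.1 α i * pd0 α g z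
    + ∑ α, ∑ j, z.2.2.2.1 α i j * pd1 α j g z
    + ∑ α, ∑ j, ∑ k, z.2.2.2.2.1 α i j k * pd2 α j k g z
    + ∑ α, ∑ j, ∑ k, ∑ l, z.2.2.2.2.2 α i j k l * pd3 α j k l g z

/-- Helmholtz expression `H_{αβ} = ∂_β f_α - ∂_α f_β + D_i ∂^i_α f_β - D_i D_j ∂^{ij}_α f_β`. -/
noncomputable def H0 (f : Fin m → Jet n m → ℝ) (α β : Fin m) (z : Jet n m) : ℝ :=
  pd0 β (f α) z - pd0 α (f β) z + ∑ i, Dtot i (pd1 α i (f β)) z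
    - ∑ i, ∑ j, Dtot i (Dtot j (pd2 α i j (f β))) z

/-- Helmholtz expression `H^i_{αβ} = ∂^i_β f_α + ∂^i_α f_β - 2 D_j ∂^{ij}_α f_β`. -/
noncomputable def H1 (f : Fin m → Jet n m → ℝ) (α β : Fin m) (i : Fin n) (z : Jet n m) : ℝ :=
  pd1 β i (f α) z + pd1 α i (f β) z - 2 * ∑ j, Dtot j (pd2 α i j (f β)) z

/-- Helmholtz expression `H^{ij}_{αβ} = ∂^{ij}_β f_α - ∂^{ij}_α f_β`. -/
noncomputable def H2 (f : Fin m → Jet n m → ℝ) (α β : Fin m) (i j : Fin n) (z : Jet n m) : ℝ :=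
  pd2 β i j (f α) z - pd2 α i j (f β) z

/-- A function on the jet space is of second order if it only depends on `(x, u, Du, D²u)`. -/
def SecondOrder (g : Jet n m → ℝ) : Prop :=
  ∀ z w : Jet n m, z.1 = w.1 → z.2.1 = w.2.1 → z.2.2.1 = w.2.2.1 → z.2.2.2.1 = w.2.2.2.1 →
    g z = g w

end Jet

namespace Helm

variable {n m : ℕ}

lemma hasDerivAt_update {ι : Type*} [DecidableEq ι] [Fintype ι] {E : Type*}
    [NormedAddCommGroup E] [NormedSpace ℝ E] (F : ι → E) (a : ι) {g : ℝ → E} {d : E} {t : ℝ}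
    (hg : HasDerivAt g d t) :
    HasDerivAt (fun s => Function.update F a (g s)) (Pi.single a d) t := by
  rw [hasDerivAt_pi]
  intro x
  simp only [Function.update_apply]
  rcases eq_or_ne x a with h | h
  · subst h; simpa using hg
  · simpa [h, Pi.single_eq_of_ne h] using hasDerivAt_const t (F x)

lemma differentiable_update {ι : Type*} [DecidableEq ι] [Fintype ι] {E : Type*}
    [NormedAddCommGroup E] [NormedSpace ℝ E] (F : ι → E) (a : ι) {g : ℝ → E}
    (hg : Differentiable ℝ g) :
    Differentiable ℝ (fun s => Function.update F a (g s)) := by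
  rw [differentiable_pi]
  intro x
  simp only [Function.update_apply]
  rcases eq_or_ne x a with h | h
  · subst h; simpa using hg
  · simpa [h] using differentiable_const (F x)

lemma pathx_diff (z : Jet n m) (i : Fin n) :
    Differentiable ℝ (fun t : ℝ => ((Function.update z.1 i t, z.2) : Jet n m)) :=
  (differentiable_update _ _ differentiable_id).prodMk (differentiable_const _)

lemma path0_diff (z : Jet n m) (α : Fin m) :
    Differentiable ℝ (fun t : ℝ => ((z.1, Function.update z.2.1 α t, z.2.2) : Jet n m)) :=
  (differentiable_const _).prodMk
    ((differentiable_update _ _ differentiable_id).prodMk (differentiable_const _))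

lemma path1_diff (z : Jet n m) (α : Fin m) (i : Fin n) :
    Differentiable ℝ (fun t : ℝ => ((z.1, z.2.1,
      Function.update z.2.2.1 α (Function.update (z.2.2.1 α) i t), z.2.2.2) : Jet n m)) :=
  (differentiable_const _).prodMk ((differentiable_const _).prodMk
    ((differentiable_update _ _ (differentiable_update _ _ differentiable_id)).prodMk
      (differentiable_const _)))

lemma path2_hasDerivAt (z : Jet n m) (α : Fin m) (i j : Fin n) (t : ℝ) :
    HasDerivAt (fun t : ℝ => ((z.1, z.2.1, z.2.2.1,
      Function.update z.2.2.2.1 α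
        (Function.update (z.2.2.2.1 α) i (Function.update (z.2.2.2.1 α i) j t)),
      z.2.2.2.2) : Jet n m))
      ((0, 0, 0, Pi.single α (Pi.single i (Pi.single j (1 : ℝ))), 0) : Jet n m) t :=
  (hasDerivAt_const _ _).prodMk ((hasDerivAt_const _ _).prodMk ((hasDerivAt_const _ _).prodMk
    ((hasDerivAt_update _ _ (hasDerivAt_update _ _ (hasDerivAt_update _ _
      (hasDerivAt_id t)))).prodMk (hasDerivAt_const _ _))))

lemma path2_diff (z : Jet n m) (α : Fin m) (i j : Fin n) :
    Differentiable ℝ (fun t : ℝ => ((z.1, z.2.1, z.2.2.1,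
      Function.update z.2.2.2.1 α
        (Function.update (z.2.2.2.1 α) i (Function.update (z.2.2.2.1 α i) j t)),
      z.2.2.2.2) : Jet n m)) :=
  fun t => (path2_hasDerivAt z α i j t).differentiableAt

lemma path3_diff (z : Jet n m) (α : Fin m) (i j k : Fin n) :
    Differentiable ℝ (fun t : ℝ => ((z.1, z.2.1, z.2.2.1, z.2.2.2.1,
      Function.update z.2.2.2.2.1 α
        (Function.update (z.2.2.2.2.1 α) i
          (Function.update (z.2.2.2.2.1 α i) j
            (Function.update (z.2.2.2.2.1 α i j) k t))),
      z.2.2.2.2.2) : Jet n m)) :=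
  (differentiable_const _).prodMk ((differentiable_const _).prodMk ((differentiable_const _).prodMk
    ((differentiable_const _).prodMk
      ((differentiable_update _ _ (differentiable_update _ _ (differentiable_update _ _
        (differentiable_update _ _ differentiable_id)))).prodMk (differentiable_const _)))))

lemma pd2_eq_fderiv {g : Jet n m → ℝ} (hg : Differentiable ℝ g) (α : Fin m) (i j : Fin n)
    (z : Jet n m) :
    Jet.pd2 α i j g z
      = fderiv ℝ g z ((0, 0, 0, Pi.single α (Pi.single i (Pi.single j (1 : ℝ))), 0) : Jet n m) := by
  have hz : ((z.1, z.2.1, z.2.2.1,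
      Function.update z.2.2.2.1 α
        (Function.update (z.2.2.2.1 α) i
          (Function.update (z.2.2.2.1 α i) j (z.2.2.2.1 α i j))),
      z.2.2.2.2) : Jet n m) = z := by
    simp [Function.update_eq_self]
  have key := ((hg z).hasFDerivAt.comp_hasDerivAt_of_eq _
    (path2_hasDerivAt z α i j (z.2.2.2.1 α i j)) hz.symm)
  exact key.deriv

lemma pd2_differentiable {g : Jet n m → ℝ} (hg : ContDiff ℝ (⊤ : ℕ∞) g) (α : Fin m) (i j : Fin n) :
    Differentiable ℝ (Jet.pd2 α i j g) := by
  have h : Jet.pd2 α i j g = fun z =>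
      fderiv ℝ g z ((0, 0, 0, Pi.single α (Pi.single i (Pi.single j (1 : ℝ))), 0) : Jet n m) :=
    funext fun z => pd2_eq_fderiv (hg.differentiable (by simp)) α i j z
  rw [h]
  exact (((hg.fderiv_right (m := 1) (by exact WithTop.coe_le_coe.mpr (le_top : ((1 + 1 : ℕ) : ℕ∞) ≤ ⊤))).clm_apply contDiff_const).differentiable one_ne_zero)

lemma pdx_sub {g h : Jet n m → ℝ} (hg : Differentiable ℝ g) (hh : Differentiable ℝ h)
    (i : Fin n) (z : Jet n m) :
    Jet.pdx i (fun w => g w - h w) z = Jet.pdx i g z - Jet.pdx i h z := by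
  unfold Jet.pdx
  exact deriv_sub ((hg _).comp _ ((pathx_diff z i) _)) ((hh _).comp _ ((pathx_diff z i) _))

lemma pd0_sub {g h : Jet n m → ℝ} (hg : Differentiable ℝ g) (hh : Differentiable ℝ h)
    (α : Fin m) (z : Jet n m) :
    Jet.pd0 α (fun w => g w - h w) z = Jet.pd0 α g z - Jet.pd0 α h z := by
  unfold Jet.pd0
  exact deriv_sub ((hg _).comp _ ((path0_diff z α) _)) ((hh _).comp _ ((path0_diff z α) _))

lemma pd1_sub {g h : Jet n m → ℝ} (hg : Differentiable ℝ g) (hh : Differentiable ℝ h)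
    (α : Fin m) (i : Fin n) (z : Jet n m) :
    Jet.pd1 α i (fun w => g w - h w) z = Jet.pd1 α i g z - Jet.pd1 α i h z := by
  unfold Jet.pd1
  exact deriv_sub ((hg _).comp _ ((path1_diff z α i) _)) ((hh _).comp _ ((path1_diff z α i) _))

lemma pd2_sub {g h : Jet n m → ℝ} (hg : Differentiable ℝ g) (hh : Differentiable ℝ h)
    (α : Fin m) (i j : Fin n) (z : Jet n m) :
    Jet.pd2 α i j (fun w => g w - h w) z = Jet.pd2 α i j g z - Jet.pd2 α i j h z := by
  unfold Jet.pd2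
  exact deriv_sub ((hg _).comp _ ((path2_diff z α i j) _)) ((hh _).comp _ ((path2_diff z α i j) _))

lemma pd3_sub {g h : Jet n m → ℝ} (hg : Differentiable ℝ g) (hh : Differentiable ℝ h)
    (α : Fin m) (i j k : Fin n) (z : Jet n m) :
    Jet.pd3 α i j k (fun w => g w - h w) z = Jet.pd3 α i j k g z - Jet.pd3 α i j k h z := by
  unfold Jet.pd3
  exact deriv_sub ((hg _).comp _ ((path3_diff z α i j k) _))
    ((hh _).comp _ ((path3_diff z α i j k) _))

lemma Dtot_sub (j : Fin n) {g h : Jet n m → ℝ} (hg : Differentiable ℝ g)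
    (hh : Differentiable ℝ h) (z : Jet n m) :
    Jet.Dtot j (fun w => g w - h w) z = Jet.Dtot j g z - Jet.Dtot j h z := by
  unfold Jet.Dtot
  simp only [pdx_sub hg hh, pd0_sub hg hh, pd1_sub hg hh, pd2_sub hg hh, pd3_sub hg hh,
    mul_sub, Finset.sum_sub_distrib]
  ring

end Helm

/-- Helmholtz dependency: `H^i_{αβ} - H^i_{βα} - 2 D_j H^{ij}_{αβ} = 0` identically,
whether or not `f` is variational. -/
theorem stmt_9 {n m : ℕ} (f : Fin m → Jet n m → ℝ)
    (hf : ∀ α, ContDiff ℝ (⊤ : ℕ∞) (f α)) (hord : ∀ α, Jet.SecondOrder (f α)) :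
    ∀ (α β : Fin m) (i : Fin n) (z : Jet n m),
      Jet.H1 f α β i z - Jet.H1 f β α i z
        - 2 * ∑ j, Jet.Dtot j (Jet.H2 f α β i j) z = 0 := by
  intro α β i z
  have hd : ∀ (γ δ : Fin m) (j : Fin n),
      Jet.Dtot j (Jet.H2 f γ δ i j) z
        = Jet.Dtot j (Jet.pd2 δ i j (f γ)) z - Jet.Dtot j (Jet.pd2 γ i j (f δ)) z := by
    intro γ δ j
    exact Helm.Dtot_sub j (Helm.pd2_differentiable (hf γ) δ i j)
      (Helm.pd2_differentiable (hf δ) γ i j) z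
  simp only [Jet.H1, hd]
  rw [Finset.sum_sub_distrib]
  ring
end

section
/- For a second-order source form with coefficients f_α, the Helmholtz expressions satisfy the dependency H_{αβ} + H_{βα} − D_i H^i_{αβ} + D_i D_j H^{ij}_{αβ} = 0 identically, regardless of whether f is variational. -/
namespace Jet
variable {n m : ℕ}


lemma hasDerivAt_upd1 {a : ℕ} (u : Fin a → ℝ) (i : Fin a) (t : ℝ) :
    HasDerivAt (fun t => Function.update u i t) (Pi.single i 1) t := by
  rw [hasDerivAt_pi]
  intro b
  rcases eq_or_ne b i with h | h
  · subst h
    simp only [Function.update_self, Pi.single_eq_same]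
    exact hasDerivAt_id t
  · simp only [Function.update_of_ne h, Pi.single_eq_of_ne h]
    exact hasDerivAt_const t _

lemma hasDerivAt_upd2 {a b : ℕ} (U : Fin a → Fin b → ℝ) (α : Fin a) (i : Fin b) (t : ℝ) :
    HasDerivAt (fun t => Function.update U α (Function.update (U α) i t))
      (Pi.single α (Pi.single i 1)) t := by
  rw [hasDerivAt_pi]
  intro β
  rcases eq_or_ne β α with h | h
  · subst h
    simp only [Function.update_self, Pi.single_eq_same]
    exact hasDerivAt_upd1 (U β) i t
  · simp only [Function.update_of_ne h, Pi.single_eq_of_ne h]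
    exact hasDerivAt_const t _

lemma hasDerivAt_upd3 {a b c : ℕ} (U : Fin a → Fin b → Fin c → ℝ) (α : Fin a) (i : Fin b)
    (j : Fin c) (t : ℝ) :
    HasDerivAt (fun t => Function.update U α
        (Function.update (U α) i (Function.update (U α i) j t)))
      (Pi.single α (Pi.single i (Pi.single j 1))) t := by
  rw [hasDerivAt_pi]
  intro β
  rcases eq_or_ne β α with h | h
  · subst h
    simp only [Function.update_self, Pi.single_eq_same]
    exact hasDerivAt_upd2 (U β) i j t
  · simp only [Function.update_of_ne h, Pi.single_eq_of_ne h]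
    exact hasDerivAt_const t _

lemma hasDerivAt_upd4 {a b c d : ℕ} (U : Fin a → Fin b → Fin c → Fin d → ℝ) (α : Fin a)
    (i : Fin b) (j : Fin c) (k : Fin d) (t : ℝ) :
    HasDerivAt (fun t => Function.update U α
        (Function.update (U α) i
          (Function.update (U α i) j (Function.update (U α i j) k t))))
      (Pi.single α (Pi.single i (Pi.single j (Pi.single k 1)))) t := by
  rw [hasDerivAt_pi]
  intro β
  rcases eq_or_ne β α with h | h
  · subst h
    simp only [Function.update_self, Pi.single_eq_same]
    exact hasDerivAt_upd3 (U β) i j k t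
  · simp only [Function.update_of_ne h, Pi.single_eq_of_ne h]
    exact hasDerivAt_const t _

/-- Direction vectors. -/
noncomputable def ex (i : Fin n) : Jet n m := (Pi.single i 1, 0, 0, 0, 0, 0)
noncomputable def e0 (α : Fin m) : Jet n m := (0, Pi.single α 1, 0, 0, 0, 0)
noncomputable def e1 (α : Fin m) (i : Fin n) : Jet n m :=
  (0, 0, Pi.single α (Pi.single i 1), 0, 0, 0)
noncomputable def e2 (α : Fin m) (i j : Fin n) : Jet n m :=
  (0, 0, 0, Pi.single α (Pi.single i (Pi.single j 1)), 0, 0)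
noncomputable def e3 (α : Fin m) (i j k : Fin n) : Jet n m :=
  (0, 0, 0, 0, Pi.single α (Pi.single i (Pi.single j (Pi.single k 1))), 0)

variable {g : Jet n m → ℝ} {z : Jet n m}

lemma pdx_eq (hg : DifferentiableAt ℝ g z) (i : Fin n) :
    pdx i g z = fderiv ℝ g z (ex i) := by
  have hc : HasDerivAt (fun t => ((Function.update z.1 i t, z.2) : Jet n m))
      (ex i) (z.1 i) := (hasDerivAt_upd1 z.1 i _).prodMk (hasDerivAt_const _ _)
  have hz : ((Function.update z.1 i (z.1 i), z.2) : Jet n m) = z := by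
    simp [Function.update_eq_self]
  have key := ((hz ▸ hg.hasFDerivAt).comp_hasDerivAt (z.1 i) hc).deriv
  rw [hz] at key
  exact key

lemma pd0_eq (hg : DifferentiableAt ℝ g z) (α : Fin m) :
    pd0 α g z = fderiv ℝ g z (e0 α) := by
  have hc : HasDerivAt (fun t => ((z.1, Function.update z.2.1 α t, z.2.2) : Jet n m))
      (e0 α) (z.2.1 α) :=
    (hasDerivAt_const _ _).prodMk ((hasDerivAt_upd1 z.2.1 α _).prodMk (hasDerivAt_const _ _))
  have hz : ((z.1, Function.update z.2.1 α (z.2.1 α), z.2.2) : Jet n m) = z := by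
    simp [Function.update_eq_self]
  have key := ((hz ▸ hg.hasFDerivAt).comp_hasDerivAt (z.2.1 α) hc).deriv
  rw [hz] at key
  exact key

lemma pd1_eq (hg : DifferentiableAt ℝ g z) (α : Fin m) (i : Fin n) :
    pd1 α i g z = fderiv ℝ g z (e1 α i) := by
  have hc : HasDerivAt (fun t => ((z.1, z.2.1,
      Function.update z.2.2.1 α (Function.update (z.2.2.1 α) i t), z.2.2.2) : Jet n m))
      (e1 α i) (z.2.2.1 α i) :=
    (hasDerivAt_const _ _).prodMk ((hasDerivAt_const _ _).prodMk
      ((hasDerivAt_upd2 z.2.2.1 α i _).prodMk (hasDerivAt_const _ _)))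
  have hz : ((z.1, z.2.1,
      Function.update z.2.2.1 α (Function.update (z.2.2.1 α) i (z.2.2.1 α i)),
      z.2.2.2) : Jet n m) = z := by
    simp [Function.update_eq_self]
  have key := ((hz ▸ hg.hasFDerivAt).comp_hasDerivAt (z.2.2.1 α i) hc).deriv
  rw [hz] at key
  exact key

lemma pd2_eq (hg : DifferentiableAt ℝ g z) (α : Fin m) (i j : Fin n) :
    pd2 α i j g z = fderiv ℝ g z (e2 α i j) := by
  have hc : HasDerivAt (fun t => ((z.1, z.2.1, z.2.2.1,
      Function.update z.2.2.2.1 α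
        (Function.update (z.2.2.2.1 α) i (Function.update (z.2.2.2.1 α i) j t)),
      z.2.2.2.2) : Jet n m)) (e2 α i j) (z.2.2.2.1 α i j) :=
    (hasDerivAt_const _ _).prodMk ((hasDerivAt_const _ _).prodMk ((hasDerivAt_const _ _).prodMk
      ((hasDerivAt_upd3 z.2.2.2.1 α i j _).prodMk (hasDerivAt_const _ _))))
  have hz : ((z.1, z.2.1, z.2.2.1,
      Function.update z.2.2.2.1 α
        (Function.update (z.2.2.2.1 α) i
          (Function.update (z.2.2.2.1 α i) j (z.2.2.2.1 α i j))),
      z.2.2.2.2) : Jet n m) = z := by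
    simp [Function.update_eq_self]
  have key := ((hz ▸ hg.hasFDerivAt).comp_hasDerivAt (z.2.2.2.1 α i j) hc).deriv
  rw [hz] at key
  exact key

lemma pd3_eq (hg : DifferentiableAt ℝ g z) (α : Fin m) (i j k : Fin n) :
    pd3 α i j k g z = fderiv ℝ g z (e3 α i j k) := by
  have hc : HasDerivAt (fun t => ((z.1, z.2.1, z.2.2.1, z.2.2.2.1,
      Function.update z.2.2.2.2.1 α
        (Function.update (z.2.2.2.2.1 α) i
          (Function.update (z.2.2.2.2.1 α i) j
            (Function.update (z.2.2.2.2.1 α i j) k t))),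
      z.2.2.2.2.2) : Jet n m)) (e3 α i j k) (z.2.2.2.2.1 α i j k) :=
    (hasDerivAt_const _ _).prodMk ((hasDerivAt_const _ _).prodMk ((hasDerivAt_const _ _).prodMk
      ((hasDerivAt_const _ _).prodMk
        ((hasDerivAt_upd4 z.2.2.2.2.1 α i j k _).prodMk (hasDerivAt_const _ _)))))
  have hz : ((z.1, z.2.1, z.2.2.1, z.2.2.2.1,
      Function.update z.2.2.2.2.1 α
        (Function.update (z.2.2.2.2.1 α) i
          (Function.update (z.2.2.2.2.1 α i) j
            (Function.update (z.2.2.2.2.1 α i j) k (z.2.2.2.2.1 α i j k)))),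
      z.2.2.2.2.2) : Jet n m) = z := by
    simp [Function.update_eq_self]
  have key := ((hz ▸ hg.hasFDerivAt).comp_hasDerivAt (z.2.2.2.2.1 α i j k) hc).deriv
  rw [hz] at key
  exact key


/-- The "total derivative vector field". -/
noncomputable def Vf (i : Fin n) (z : Jet n m) : Jet n m :=
  ex i + (∑ α, z.2.2.1 α i • e0 α) + (∑ α, ∑ j, z.2.2.2.1 α i j • e1 α j)
    + (∑ α, ∑ j, ∑ k, z.2.2.2.2.1 α i j k • e2 α j k)
    + (∑ α, ∑ j, ∑ k, ∑ l, z.2.2.2.2.2 α i j k l • e3 α j k l)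

lemma Dtot_eq (hg : DifferentiableAt ℝ g z) (i : Fin n) :
    Dtot i g z = fderiv ℝ g z (Vf i z) := by
  simp only [Dtot, Vf, pdx_eq hg, pd0_eq hg, pd1_eq hg, pd2_eq hg, pd3_eq hg,
    map_add, map_sum, map_smul, smul_eq_mul]

variable {A B : Jet n m → ℝ}

lemma Dtot_add (hA : DifferentiableAt ℝ A z) (hB : DifferentiableAt ℝ B z) (i : Fin n) :
    Dtot i (fun w => A w + B w) z = Dtot i A z + Dtot i B z := by
  rw [Dtot_eq (hA.fun_add hB), Dtot_eq hA, Dtot_eq hB, fderiv_fun_add hA hB,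
    ContinuousLinearMap.add_apply]

lemma Dtot_sub (hA : DifferentiableAt ℝ A z) (hB : DifferentiableAt ℝ B z) (i : Fin n) :
    Dtot i (fun w => A w - B w) z = Dtot i A z - Dtot i B z := by
  rw [Dtot_eq (hA.fun_sub hB), Dtot_eq hA, Dtot_eq hB, fderiv_fun_sub hA hB,
    ContinuousLinearMap.sub_apply]

lemma Dtot_const_mul (hA : DifferentiableAt ℝ A z) (c : ℝ) (i : Fin n) :
    Dtot i (fun w => c * A w) z = c * Dtot i A z := by
  rw [Dtot_eq (hA.const_mul c), Dtot_eq hA, fderiv_const_mul hA c,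
    ContinuousLinearMap.smul_apply, smul_eq_mul]

lemma Dtot_sum {ι : Type*} (s : Finset ι) (F : ι → Jet n m → ℝ)
    (hF : ∀ k ∈ s, DifferentiableAt ℝ (F k) z) (i : Fin n) :
    Dtot i (fun w => ∑ k ∈ s, F k w) z = ∑ k ∈ s, Dtot i (F k) z := by
  rw [Dtot_eq (DifferentiableAt.fun_sum hF), fderiv_fun_sum hF, ContinuousLinearMap.sum_apply]
  exact Finset.sum_congr rfl fun k hk => (Dtot_eq (hF k hk) i).symm


lemma contDiff_coord3 (α : Fin m) (i : Fin n) :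
    ContDiff ℝ (⊤ : ℕ∞) (fun z : Jet n m => z.2.2.1 α i) := by fun_prop
lemma contDiff_coord4 (α : Fin m) (i j : Fin n) :
    ContDiff ℝ (⊤ : ℕ∞) (fun z : Jet n m => z.2.2.2.1 α i j) := by fun_prop
lemma contDiff_coord5 (α : Fin m) (i j k : Fin n) :
    ContDiff ℝ (⊤ : ℕ∞) (fun z : Jet n m => z.2.2.2.2.1 α i j k) := by fun_prop
lemma contDiff_coord6 (α : Fin m) (i j k l : Fin n) :
    ContDiff ℝ (⊤ : ℕ∞) (fun z : Jet n m => z.2.2.2.2.2 α i j k l) := by fun_prop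

lemma contDiff_Vf (i : Fin n) : ContDiff ℝ (⊤ : ℕ∞) (Vf (m := m) i) := by
  unfold Vf
  refine ((((contDiff_const.add ?_).add ?_).add ?_).add ?_)
  · exact ContDiff.sum fun α _ => (contDiff_coord3 α i).smul contDiff_const
  · exact ContDiff.sum fun α _ => ContDiff.sum fun j _ =>
      (contDiff_coord4 α i j).smul contDiff_const
  · exact ContDiff.sum fun α _ => ContDiff.sum fun j _ => ContDiff.sum fun k _ =>
      (contDiff_coord5 α i j k).smul contDiff_const
  · exact ContDiff.sum fun α _ => ContDiff.sum fun j _ => ContDiff.sum fun k _ =>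
      ContDiff.sum fun l _ => (contDiff_coord6 α i j k l).smul contDiff_const

lemma ContDiff.pd1 (hg : ContDiff ℝ (⊤ : ℕ∞) g) (α : Fin m) (i : Fin n) :
    ContDiff ℝ (⊤ : ℕ∞) (pd1 α i g) := by
  have : Jet.pd1 α i g = fun z => fderiv ℝ g z (e1 α i) :=
    funext fun z => pd1_eq (hg.differentiable (by simp)).differentiableAt α i
  rw [this]
  exact (hg.fderiv_right (by simp)).clm_apply contDiff_const

lemma ContDiff.pd2 (hg : ContDiff ℝ (⊤ : ℕ∞) g) (α : Fin m) (i j : Fin n) :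
    ContDiff ℝ (⊤ : ℕ∞) (pd2 α i j g) := by
  have : Jet.pd2 α i j g = fun z => fderiv ℝ g z (e2 α i j) :=
    funext fun z => pd2_eq (hg.differentiable (by simp)).differentiableAt α i j
  rw [this]
  exact (hg.fderiv_right (by simp)).clm_apply contDiff_const

lemma ContDiff.Dtot (hg : ContDiff ℝ (⊤ : ℕ∞) g) (i : Fin n) :
    ContDiff ℝ (⊤ : ℕ∞) (Dtot i g) := by
  have : Jet.Dtot i g = fun z => fderiv ℝ g z (Vf i z) :=
    funext fun z => Dtot_eq (hg.differentiable (by simp)).differentiableAt i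
  rw [this]
  exact (hg.fderiv_right (by simp)).clm_apply (contDiff_Vf i)

end Jet

/-- Helmholtz dependency: `H_{αβ} + H_{βα} - D_i H^i_{αβ} + D_i D_j H^{ij}_{αβ} = 0`
identically, whether or not `f` is variational. -/
theorem stmt_10 {n m : ℕ} (f : Fin m → Jet n m → ℝ)
    (hf : ∀ α, ContDiff ℝ (⊤ : ℕ∞) (f α)) (hord : ∀ α, Jet.SecondOrder (f α)) :
    ∀ (α β : Fin m) (z : Jet n m),
      Jet.H0 f α β z + Jet.H0 f β α z
        - ∑ i, Jet.Dtot i (Jet.H1 f α β i) z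
        + ∑ i, ∑ j, Jet.Dtot i (Jet.Dtot j (Jet.H2 f α β i j)) z = 0 := by
  intro α β z
  -- differentiability facts
  have d1 : ∀ (γ δ : Fin m) (i : Fin n) (w : Jet n m),
      DifferentiableAt ℝ (Jet.pd1 γ i (f δ)) w := fun γ δ i w =>
    ((Jet.ContDiff.pd1 (hf δ) γ i).differentiable (by simp)).differentiableAt
  have d2 : ∀ (γ δ : Fin m) (i j : Fin n) (w : Jet n m),
      DifferentiableAt ℝ (Jet.pd2 γ i j (f δ)) w := fun γ δ i j w =>
    ((Jet.ContDiff.pd2 (hf δ) γ i j).differentiable (by simp)).differentiableAt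
  have dD2 : ∀ (γ δ : Fin m) (i j : Fin n) (w : Jet n m),
      DifferentiableAt ℝ (Jet.Dtot j (Jet.pd2 γ i j (f δ))) w := fun γ δ i j w =>
    ((Jet.ContDiff.Dtot (Jet.ContDiff.pd2 (hf δ) γ i j) j).differentiable (by simp)).differentiableAt
  -- expand D_i H1
  have h1 : ∀ i, Jet.Dtot i (Jet.H1 f α β i) z
      = Jet.Dtot i (Jet.pd1 β i (f α)) z + Jet.Dtot i (Jet.pd1 α i (f β)) z
        - 2 * ∑ j, Jet.Dtot i (Jet.Dtot j (Jet.pd2 α i j (f β))) z := by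
    intro i
    have e : Jet.H1 f α β i = fun w =>
        (Jet.pd1 β i (f α) w + Jet.pd1 α i (f β) w)
          - (2 * ∑ j, Jet.Dtot j (Jet.pd2 α i j (f β)) w) := rfl
    rw [e, Jet.Dtot_sub ((d1 β α i z).fun_add (d1 α β i z))
          ((DifferentiableAt.fun_sum fun j _ => dD2 α β i j z).const_mul 2),
        Jet.Dtot_add (d1 β α i z) (d1 α β i z),
        Jet.Dtot_const_mul (DifferentiableAt.fun_sum fun j _ => dD2 α β i j z) 2,
        Jet.Dtot_sum _ _ (fun j _ => dD2 α β i j z)]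
  -- expand D_i D_j H2
  have h2 : ∀ i j, Jet.Dtot i (Jet.Dtot j (Jet.H2 f α β i j)) z
      = Jet.Dtot i (Jet.Dtot j (Jet.pd2 β i j (f α))) z
        - Jet.Dtot i (Jet.Dtot j (Jet.pd2 α i j (f β))) z := by
    intro i j
    have e : Jet.Dtot j (Jet.H2 f α β i j)
        = fun w => Jet.Dtot j (Jet.pd2 β i j (f α)) w
            - Jet.Dtot j (Jet.pd2 α i j (f β)) w :=
      funext fun w => Jet.Dtot_sub (d2 β α i j w) (d2 α β i j w) j
    rw [e, Jet.Dtot_sub (dD2 β α i j z) (dD2 α β i j z)]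
  simp only [Jet.H0, h1, h2]
  simp only [Finset.sum_add_distrib, Finset.sum_sub_distrib]
  simp only [← Finset.mul_sum]
  ring
end
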